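/- In an Eulerian digraph G with a distinguished root vertex r, given an Eulerian circuit starting and ending at r, the set consisting of, for each vertex v ≠ r, the last arc of the circuit with tail v, forms a spanning arborescence converging to r (i.e., from every vertex there is a directed path to r using only these arcs). -/

import Mathlib

/-! Follow the last arcs from `v ≠ r`. Unless the last arc `f v` out of `v` ends the circuit (and
so enters `r`), the circuit continues from its head `w` with an arc leaving `w` at a later
position, so the last arc `f w` out of `w` also comes later than `f v`. The positions of the
arcs visited therefore increase strictly, and the walk must reach `r`. -/

theorem Relation.reflTransGen_of_exists_measure_lt {α : Type*} {R : α → α → Prop} {r : α}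
    (μ : α → ℕ) (h : ∀ v, v ≠ r → ∃ w, R v w ∧ (w = r ∨ μ w < μ v)) (v : α) :
    Relation.ReflTransGen R v r := by
  induction v using (measure μ).wf.induction with
  | h v ih =>
    by_cases hv : v = r
    · exact hv ▸ .refl
    obtain ⟨w, hvw, rfl | hlt⟩ := h v hv
    · exact .single hvw
    · exact .head hvw (ih w hlt)

theorem List.IsChain.exists_rel_idxOf_lt {α : Type*} [DecidableEq α] {R : α → α → Prop}
    {l : List α} (hR : l.IsChain R) (hl : l.Nodup) {a : α} (ha : a ∈ l)
    (hlast : l.getLast? ≠ some a) : ∃ b ∈ l, R a b ∧ l.idxOf a < l.idxOf b := by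
  have hi : l.idxOf a < l.length := idxOf_lt_length_of_mem ha
  have hi' : l.idxOf a + 1 < l.length := by
    refine lt_of_le_of_ne hi fun hend => hlast ?_
    rw [getLast?_eq_getElem?, ← hend, Nat.add_sub_cancel, getElem?_eq_getElem hi,
      getElem_idxOf hi]
  refine ⟨l[l.idxOf a + 1], getElem_mem hi', ?_, by rw [hl.idxOf_getElem]; omega⟩
  simpa only [getElem_idxOf hi] using hR.getElem _ hi'

theorem lastArcs_converge_to_root {V E : Type*}
    [DecidableEq E]
    (tl hd : E → V) (r : V) (es : List E)
    (hend : es.getLast?.map hd = some r)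
    (hchain : List.Chain' (fun e f => hd e = tl f) es)
    (hnodup : es.Nodup)
    (hall : ∀ e : E, e ∈ es)
    (f : V → E)
    (hf : ∀ v : V, v ≠ r → tl (f v) = v ∧
      ∀ e ∈ es, tl e = v → es.idxOf e ≤ es.idxOf (f v)) :
    ∀ v : V, Relation.ReflTransGen (fun x y => x ≠ r ∧ hd (f x) = y) v r := by
  refine Relation.reflTransGen_of_exists_measure_lt (fun x => es.length - es.idxOf (f x))
    fun v hv => ⟨hd (f v), ⟨hv, rfl⟩, or_iff_not_imp_left.2 fun hw => ?_⟩
  have hnotlast : es.getLast? ≠ some (f v) := fun h => hw (by simpa [h] using hend)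
  obtain ⟨e, he, hhd, hlt⟩ :=
    List.IsChain.exists_rel_idxOf_lt hchain hnodup (hall (f v)) hnotlast
  have hle : es.idxOf e ≤ es.idxOf (f (hd (f v))) := (hf _ hw).2 e he hhd.symm
  have hbound : es.idxOf (f (hd (f v))) ≤ es.length := List.idxOf_le_length
  omega
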